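/- arXiv:2403.15645 — 2 statements merged into one kernel-verified Lean document; each statement's English description precedes it below -/
import Mathlib

section
/- For n ≥ 3k and k ≥ 2, the total mutual-visibility number of the Kneser graph KG(n,k) equals C(n,k) minus the minimum number of edges of a k-uniform hypergraph on n vertices with transversal number at least 2k. -/
/-- A transversal of a hypergraph given by its edge set `E`: a vertex set
meeting every edge. -/
def IsTransversal {α : Type*} [DecidableEq α] (E : Finset (Finset α)) (T : Finset α) : Prop :=
  ∀ e ∈ E, (e ∩ T).Nonempty

/-- The transversal number: minimum cardinality of a transversal. -/
noncomputable def transversalNum {α : Type*} [DecidableEq α] (E : Finset (Finset α)) : ℕ :=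
  sInf {m | ∃ T : Finset α, IsTransversal E T ∧ T.card = m}

/-- Two vertices `u` and `v` are `X`-visible if some shortest `u,v`-path has
no internal vertex in `X`. -/
def XVisible {V : Type*} (G : SimpleGraph V) (X : Set V) (u v : V) : Prop :=
  ∃ p : G.Walk u v, p.length = G.dist u v ∧
    ∀ w ∈ p.support, w ∈ X → w = u ∨ w = v

/-- `X` is a total mutual-visibility set if every pair of vertices is `X`-visible. -/
def IsTotalMVSet {V : Type*} (G : SimpleGraph V) (X : Set V) : Prop :=
  ∀ u v : V, XVisible G X u v

/-- `X` is a mutual-visibility set if every pair of vertices of `X` is `X`-visible. -/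
def IsMVSet {V : Type*} (G : SimpleGraph V) (X : Set V) : Prop :=
  ∀ u ∈ X, ∀ v ∈ X, XVisible G X u v

/-- The total mutual-visibility number of a graph. -/
noncomputable def totalMVNumber {V : Type*} [Fintype V] (G : SimpleGraph V) : ℕ :=
  sSup {m | ∃ X : Finset V, IsTotalMVSet G ↑X ∧ X.card = m}

/-- The mutual-visibility number of a graph. -/
noncomputable def mvNumber {V : Type*} [Fintype V] (G : SimpleGraph V) : ℕ :=
  sSup {m | ∃ X : Finset V, IsMVSet G ↑X ∧ X.card = m}

/-- The Kneser graph `KG(n,k)`: vertices are the `k`-subsets of `[n]`,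
adjacent iff disjoint. -/
def KneserGraph (n k : ℕ) : SimpleGraph {A : Finset (Fin n) // A.card = k} where
  Adj A B := A ≠ B ∧ Disjoint A.1 B.1
  symm := ⟨fun A B h => ⟨h.1.symm, h.2.symm⟩⟩
  loopless := ⟨fun A h => h.1 rfl⟩

/-- `C*(n,k)`: the minimum number of edges of a `k`-uniform hypergraph on an
`n`-element vertex set whose transversal number is at least `2k`. -/
noncomputable def Cstar (n k : ℕ) : ℕ :=
  sInf {m | ∃ E : Finset (Finset (Fin n)),
    (∀ e ∈ E, e.card = k) ∧ 2 * k ≤ transversalNum E ∧ E.card = m}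

/-!
For `n ≥ 3k` any two `k`-sets avoid a common `k`-set, so `KG(n,k)` has diameter two and `X` is a
total mutual-visibility set iff every two distinct intersecting `k`-sets `A`, `B` have a common
neighbour outside `X`, i.e. some `k`-set outside `X` avoids `A ∪ B`. Such unions `A ∪ B` are all
sets of size between `k + 1` and `2k - 1`, so this says exactly that the `k`-sets outside `X`
form a hypergraph `E` with no transversal of size less than `2k`. Since `X ↦ E` is a bijection
onto the `k`-uniform hypergraphs and `|X| = C(n,k) - |E|`, maximizing `|X|` is minimizing `|E|`.
-/

namespace SimpleGraph

variable {V : Type*} {G : SimpleGraph V} {X : Set V} {u v : V}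

lemma xVisible_of_adj_or_eq (h : G.Adj u v ∨ u = v) : XVisible G X u v := by
  rcases h with h | rfl
  · refine ⟨h.toWalk, by simp [dist_eq_one_iff_adj.mpr h], fun w hw _ => ?_⟩
    simpa using hw
  · exact ⟨.nil, by simp, fun w hw _ => by simp_all⟩

lemma xVisible_iff_of_edist_eq_two (h : G.edist u v = 2) :
    XVisible G X u v ↔ ∃ w ∈ G.commonNeighbors u v, w ∉ X := by
  have hdist : G.dist u v = 2 := by simp [dist, h]
  constructor
  · rintro ⟨p, hp, hX⟩
    rw [hdist] at hp
    match p, hp with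
    | .cons h₁ (.cons h₂ .nil), _ =>
      exact ⟨_, ⟨h₁, h₂.symm⟩, fun hw => (hX _ (by simp) hw).elim h₁.ne.symm h₂.ne⟩
  · rintro ⟨w, hw, hwX⟩
    refine ⟨.cons hw.1 (.cons hw.2.symm .nil), hdist.symm, fun x hx hxX => ?_⟩
    change x ∈ [u, w, v] at hx
    simp only [List.mem_cons, List.not_mem_nil, or_false] at hx
    rcases hx with rfl | rfl | rfl
    · exact .inl rfl
    · exact absurd hxX hwX
    · exact .inr rfl

lemma isTotalMVSet_iff_of_commonNeighbors_nonempty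
    (hG : ∀ u v, u ≠ v → ¬ G.Adj u v → (G.commonNeighbors u v).Nonempty) :
    IsTotalMVSet G X ↔ ∀ u v, u ≠ v → ¬ G.Adj u v → ∃ w ∈ G.commonNeighbors u v, w ∉ X := by
  refine ⟨fun hX u v huv hadj => ?_, fun hX u v => ?_⟩
  · exact (xVisible_iff_of_edist_eq_two
      (edist_eq_two_iff.mpr ⟨huv, hadj, hG u v huv hadj⟩)).mp (hX u v)
  · by_cases h : G.Adj u v ∨ u = v
    · exact xVisible_of_adj_or_eq h
    · push Not at h
      exact (xVisible_iff_of_edist_eq_two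
        (edist_eq_two_iff.mpr ⟨h.2, h.1, hG u v h.2 h.1⟩)).mpr (hX u v h.2 h.1)

end SimpleGraph

namespace Finset

variable {α : Type*} [DecidableEq α]

lemma exists_card_eq_disjoint [Fintype α] {S : Finset α} {k : ℕ}
    (h : S.card + k ≤ Fintype.card α) : ∃ C : Finset α, C.card = k ∧ Disjoint C S := by
  obtain ⟨C, hC, hCk⟩ := exists_subset_card_eq (s := Sᶜ) (n := k) (by rw [card_compl]; omega)
  exact ⟨C, hCk, subset_compl_iff_disjoint_right.mp hC⟩

lemma exists_union_eq_of_lt_card_lt {T : Finset α} {k : ℕ} (h₁ : k < T.card)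
    (h₂ : T.card < 2 * k) :
    ∃ A B : Finset α, A.card = k ∧ B.card = k ∧ A ≠ B ∧ ¬ Disjoint A B ∧ A ∪ B = T := by
  obtain ⟨A, hAT, hA⟩ := exists_subset_card_eq h₁.le
  obtain ⟨S, hSA, hS⟩ := exists_subset_card_eq (s := A) (n := 2 * k - T.card) (by omega)
  have hdiff : (T \ A).card = T.card - k := by rw [card_sdiff_of_subset hAT, hA]
  have hdisj : Disjoint (T \ A) S := disjoint_sdiff_self_left.mono_right hSA
  refine ⟨A, T \ A ∪ S, hA, ?_, fun hAB => ?_, fun hAB => ?_, ?_⟩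
  · rw [card_union_of_disjoint hdisj, hdiff, hS]; omega
  · obtain ⟨x, hx⟩ : (T \ A).Nonempty := by rw [← card_pos]; omega
    exact (mem_sdiff.mp hx).2 (hAB ▸ mem_union_left S hx)
  · obtain ⟨x, hx⟩ : S.Nonempty := by rw [← card_pos]; omega
    exact disjoint_left.mp hAB (hSA hx) (mem_union_right _ hx)
  · rw [← union_assoc, union_sdiff_of_subset hAT, union_eq_left.mpr (hSA.trans hAT)]

end Finset

section Transversal

variable {α : Type*} [DecidableEq α] {E : Finset (Finset α)} {T : Finset α}

lemma IsTransversal.mono {T' : Finset α} (hT : IsTransversal E T) (h : T ⊆ T') :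
    IsTransversal E T' :=
  fun e he => (hT e he).mono (Finset.inter_subset_inter_left h)

lemma transversalNum_le_card (hT : IsTransversal E T) : transversalNum E ≤ T.card :=
  Nat.sInf_le ⟨T, hT, rfl⟩

lemma le_transversalNum_iff [Fintype α] (hE : ∀ e ∈ E, e.Nonempty) {m : ℕ} :
    m ≤ transversalNum E ↔ ∀ T, IsTransversal E T → m ≤ T.card := by
  refine ⟨fun h T hT => h.trans (transversalNum_le_card hT), fun h => le_csInf ?_ ?_⟩
  · exact ⟨_, Finset.univ, fun e he => by simpa using hE e he, rfl⟩
  · rintro _ ⟨T, hT, rfl⟩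
    exact h T hT

/-- A transversal with fewer than `2k` points can be padded to `2k - 1` points and then split
into two distinct intersecting `k`-sets. -/
theorem two_mul_le_transversalNum_iff [Fintype α] {k : ℕ} (hk : 2 ≤ k)
    (hα : 2 * k ≤ Fintype.card α + 1) (hE : ∀ e ∈ E, e.card = k) :
    2 * k ≤ transversalNum E ↔ ∀ A B : Finset α, A.card = k → B.card = k → A ≠ B →
      ¬ Disjoint A B → ∃ e ∈ E, Disjoint A e ∧ Disjoint e B := by
  rw [le_transversalNum_iff fun e he => Finset.card_pos.mp (by rw [hE e he]; omega)]
  constructor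
  · intro hτ A B hA hB _ hAB
    have hcard : (A ∪ B).card < 2 * k := by
      have := Finset.card_union_add_card_inter A B
      have := Finset.card_pos.mpr (Finset.not_disjoint_iff_nonempty_inter.mp hAB)
      omega
    by_contra! hmeet
    refine hcard.not_ge (hτ _ fun e he => ?_)
    by_contra hempty
    rw [Finset.not_nonempty_iff_eq_empty, ← Finset.disjoint_iff_inter_eq_empty,
      Finset.disjoint_union_right] at hempty
    exact hmeet e he hempty.1.symm hempty.2
  · intro hsplit T hT
    by_contra! hlt
    obtain ⟨T', hTT', hT'⟩ := Finset.exists_subsuperset_card_eq (Finset.subset_univ T)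
      (n := 2 * k - 1) (by omega) (by simp; omega)
    obtain ⟨A, B, hA, hB, hne, hAB, rfl⟩ := Finset.exists_union_eq_of_lt_card_lt
      (T := T') (k := k) (by omega) (by omega)
    obtain ⟨e, he, hAe, heB⟩ := hsplit A B hA hB hne hAB
    obtain ⟨x, hx⟩ := (hT.mono hTT') e he
    rw [Finset.mem_inter, Finset.mem_union] at hx
    exact hx.2.elim (Finset.disjoint_right.mp hAe hx.1) (Finset.disjoint_left.mp heB hx.1)

end Transversal

section Cstar

variable {n k : ℕ} {E : Finset (Finset (Fin n))}

lemma Cstar_le_card (hE : ∀ e ∈ E, e.card = k) (hτ : 2 * k ≤ transversalNum E) :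
    Cstar n k ≤ E.card :=
  Nat.sInf_le ⟨E, hE, hτ, rfl⟩

lemma exists_card_eq_Cstar (hE : ∀ e ∈ E, e.card = k) (hτ : 2 * k ≤ transversalNum E) :
    ∃ E' : Finset (Finset (Fin n)),
      (∀ e ∈ E', e.card = k) ∧ 2 * k ≤ transversalNum E' ∧ E'.card = Cstar n k :=
  Nat.sInf_mem (s := {m | ∃ E : Finset (Finset (Fin n)),
    (∀ e ∈ E, e.card = k) ∧ 2 * k ≤ transversalNum E ∧ E.card = m}) ⟨_, E, hE, hτ, rfl⟩

end Cstar

namespace KneserGraph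

variable {n k : ℕ}

lemma adj_iff (hk : 0 < k) {A B : {A : Finset (Fin n) // A.card = k}} :
    (KneserGraph n k).Adj A B ↔ Disjoint A.1 B.1 := by
  refine ⟨And.right, fun h => ⟨fun hAB => ?_, h⟩⟩
  rw [hAB, disjoint_self, Finset.bot_eq_empty, ← Finset.card_eq_zero, B.2] at h
  omega

lemma commonNeighbors_nonempty (hk : 0 < k) (hn : 3 * k ≤ n)
    (A B : {A : Finset (Fin n) // A.card = k}) :
    ((KneserGraph n k).commonNeighbors A B).Nonempty := by
  obtain ⟨C, hC, hdisj⟩ := Finset.exists_card_eq_disjoint (S := A.1 ∪ B.1) (k := k)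
    (by have := Finset.card_union_le A.1 B.1; rw [A.2, B.2] at this; simp; omega)
  rw [Finset.disjoint_union_right] at hdisj
  exact ⟨⟨C, hC⟩, (KneserGraph n k).mem_commonNeighbors.mpr
    ⟨(adj_iff hk).mpr hdisj.1.symm, (adj_iff hk).mpr hdisj.2.symm⟩⟩

lemma isTotalMVSet_empty (hk : 0 < k) (hn : 3 * k ≤ n) :
    IsTotalMVSet (KneserGraph n k) ∅ :=
  (SimpleGraph.isTotalMVSet_iff_of_commonNeighbors_nonempty
      fun A B _ _ => commonNeighbors_nonempty hk hn A B).mpr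
    fun A B _ _ => (commonNeighbors_nonempty hk hn A B).imp fun _ hw => ⟨hw, by simp⟩

def complFamily (X : Finset {A : Finset (Fin n) // A.card = k}) : Finset (Finset (Fin n)) :=
  Xᶜ.map (Function.Embedding.subtype _)

lemma mem_complFamily {X : Finset {A : Finset (Fin n) // A.card = k}} {e : Finset (Fin n)} :
    e ∈ complFamily X ↔ ∃ h : e.card = k, ⟨e, h⟩ ∉ X := by
  simp [complFamily]

lemma complFamily_uniform (X : Finset {A : Finset (Fin n) // A.card = k}) :
    ∀ e ∈ complFamily X, e.card = k :=
  fun _ he => (mem_complFamily.mp he).1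

lemma card_complFamily (X : Finset {A : Finset (Fin n) // A.card = k}) :
    (complFamily X).card = n.choose k - X.card := by
  simp [complFamily, Finset.card_compl]

lemma exists_complFamily_eq {E : Finset (Finset (Fin n))} (hE : ∀ e ∈ E, e.card = k) :
    ∃ X : Finset {A : Finset (Fin n) // A.card = k}, complFamily X = E := by
  classical
  refine ⟨Finset.univ.filter (·.1 ∉ E), Finset.ext fun e => ?_⟩
  simp only [mem_complFamily, Finset.mem_filter, Finset.mem_univ, true_and, not_not]
  exact ⟨fun ⟨_, he⟩ => he, fun he => ⟨hE e he, he⟩⟩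

theorem isTotalMVSet_iff (hk : 2 ≤ k) (hn : 3 * k ≤ n)
    (X : Finset {A : Finset (Fin n) // A.card = k}) :
    IsTotalMVSet (KneserGraph n k) X ↔ 2 * k ≤ transversalNum (complFamily X) := by
  rw [SimpleGraph.isTotalMVSet_iff_of_commonNeighbors_nonempty
      fun A B _ _ => commonNeighbors_nonempty (by omega) hn A B,
    two_mul_le_transversalNum_iff hk (by simp; omega) (complFamily_uniform X)]
  simp only [Subtype.forall, Subtype.exists, ne_eq, Subtype.mk.injEq, adj_iff (show 0 < k by omega),
    SimpleGraph.mem_commonNeighbors, mem_complFamily]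
  constructor
  · intro h A B hA hB hne hAB
    obtain ⟨C, hC, ⟨hAC, hBC⟩, hX⟩ := h A hA B hB hne hAB
    exact ⟨C, ⟨hC, hX⟩, hAC, hBC.symm⟩
  · intro h A hA B hB hne hAB
    obtain ⟨C, ⟨hC, hX⟩, hAC, hCB⟩ := h A B hA hB hne hAB
    exact ⟨C, hC, ⟨hAC, hCB.symm⟩, hX⟩

end KneserGraph

/-- For `n ≥ 3k` and `k ≥ 2`, the total mutual-visibility number of `KG(n,k)`
equals `C(n,k) - C*(n,k)`. -/
theorem kneser_totalMVNumber (n k : ℕ) (hk : 2 ≤ k) (hn : 3 * k ≤ n) :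
    totalMVNumber (KneserGraph n k) = n.choose k - Cstar n k := by
  have hiff := KneserGraph.isTotalMVSet_iff hk hn
  have hcard (X : Finset {A : Finset (Fin n) // A.card = k}) :
      X.card = n.choose k - (KneserGraph.complFamily X).card := by
    have := X.card_le_univ
    rw [KneserGraph.card_complFamily]
    simp only [Fintype.card_finset_len, Fintype.card_fin] at this
    omega
  obtain ⟨E, hE, hτ, hECstar⟩ := exists_card_eq_Cstar (KneserGraph.complFamily_uniform ∅)
    ((hiff ∅).mp (Finset.coe_empty ▸ KneserGraph.isTotalMVSet_empty (by omega) hn))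
  obtain ⟨X, rfl⟩ := KneserGraph.exists_complFamily_eq hE
  refine IsGreatest.csSup_eq ⟨⟨X, (hiff X).mpr hτ, by rw [hcard, hECstar]⟩, ?_⟩
  rintro _ ⟨Y, hY, rfl⟩
  rw [hcard]
  exact Nat.sub_le_sub_left (Cstar_le_card (KneserGraph.complFamily_uniform Y) ((hiff Y).mp hY)) _
end

section
/- For n ≥ 4, the mutual-visibility number of the Johnson graph J(n,2) equals ⌊n²/3⌋. -/
/-- The Johnson graph `J(n,k)`: vertices are the `k`-subsets of `[n]`,
adjacent iff their intersection has `k - 1` elements. -/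
def JohnsonGraph (n k : ℕ) : SimpleGraph {A : Finset (Fin n) // A.card = k} where
  Adj A B := A ≠ B ∧ (A.1 ∩ B.1).card = k - 1
  symm := ⟨fun A B h => ⟨h.1.symm, by rw [Finset.inter_comm]; exact h.2⟩⟩
  loopless := ⟨fun A h => h.1 rfl⟩

/-!
Identify a set `X` of vertices of `J(n,2)` with the graph `pairGraph X` on `[n]` whose edges are
the pairs in `X`. Two disjoint pairs are at distance 2, and their common neighbours are exactly
the four pairs joining them; so they fail to be `X`-visible iff all four lie in `X`, i.e. iff
their union is a `K₄` in `pairGraph X`. Pairs at distance at most 1 are always visible. Hence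
`X` is a mutual-visibility set iff `pairGraph X` is `K₄`-free, and the maximum size is the Turán
number `ex(n, K₄) = ⌊n²/3⌋`, attained by the pairs of the Turán graph `T(n,3)`.
-/

open Finset SimpleGraph

-- The left side is the closed form of `#(turanGraph n r).edgeFinset` in Mathlib, at `r = 3`.
lemma turan_bound_three_eq (n : ℕ) :
    (n ^ 2 - (n % 3) ^ 2) * (3 - 1) / (2 * 3) + (n % 3).choose 2 = n ^ 2 / 3 := by
  obtain ⟨q, r, hr, rfl⟩ : ∃ q r, r < 3 ∧ n = 3 * q + r :=
    ⟨n / 3, n % 3, Nat.mod_lt n three_pos, (Nat.div_add_mod n 3).symm⟩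
  have hsq : (3 * q + r) ^ 2 = 3 * (3 * q ^ 2 + 2 * q * r) + r ^ 2 := by ring
  rw [hsq, show (3 * q + r) % 3 = r by omega]
  interval_cases r <;> simp <;> omega

lemma SimpleGraph.card_edgeFinset_turanGraph_three (n : ℕ) :
    #(turanGraph n 3).edgeFinset = n ^ 2 / 3 := by
  rw [card_edgeFinset_turanGraph, turan_bound_three_eq]

lemma SimpleGraph.CliqueFree.card_edgeFinset_le_sq_div_three {V : Type*} [Fintype V]
    {G : SimpleGraph V} [DecidableRel G.Adj] (h : G.CliqueFree 4) :
    #G.edgeFinset ≤ Fintype.card V ^ 2 / 3 := by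
  simpa only [turan_bound_three_eq] using h.card_edgeFinset_le (r := 3)

section PairGraph

variable {α : Type*} [DecidableEq α]

lemma Finset.eq_pair_of_card_eq_two {A : Finset α} (hA : #A = 2) {a b : α} (ha : a ∈ A)
    (hb : b ∈ A) (hab : a ≠ b) : A = {a, b} :=
  (eq_of_subset_of_card_le (insert_subset ha (singleton_subset_iff.2 hb))
    (by rw [hA, card_pair hab])).symm

def pairGraph (X : Set {A : Finset α // #A = 2}) : SimpleGraph α where
  Adj a b := ∃ A ∈ X, A.1 = {a, b}
  symm := ⟨fun a b ⟨A, hA, h⟩ => ⟨A, hA, h.trans (pair_comm a b)⟩⟩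
  loopless := ⟨fun a ⟨A, _, h⟩ => by simpa [h] using A.2⟩

variable {X : Set {A : Finset α // #A = 2}}

lemma pairGraph_adj_iff {a b : α} :
    (pairGraph X).Adj a b ↔ a ≠ b ∧ ∃ A ∈ X, a ∈ A.1 ∧ b ∈ A.1 := by
  constructor
  · rintro ⟨A, hA, h⟩
    exact ⟨(pairGraph X).ne_of_adj ⟨A, hA, h⟩, A, hA, by simp [h]⟩
  · rintro ⟨hab, A, hA, ha, hb⟩
    exact ⟨A, hA, eq_pair_of_card_eq_two A.2 ha hb hab⟩

lemma isClique_pairGraph_of_mem {A : {A : Finset α // #A = 2}} (hA : A ∈ X) :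
    (pairGraph X).IsClique (A.1 : Set α) :=
  fun _ ha _ hb hab => pairGraph_adj_iff.2 ⟨hab, A, hA, ha, hb⟩

lemma card_edgeFinset_pairGraph [Fintype α] (X : Finset {A : Finset α // #A = 2})
    [Fintype (pairGraph (X : Set {A : Finset α // #A = 2})).edgeSet] :
    #(pairGraph (X : Set {A : Finset α // #A = 2})).edgeFinset = #X := by
  refine card_bij (fun e he => ⟨e.toFinset, Sym2.card_toFinset_of_not_isDiag e
    ((pairGraph _).not_isDiag_of_mem_edgeSet (mem_edgeFinset.1 he))⟩) ?_ ?_ ?_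
  · intro e he
    induction e using Sym2.ind with
    | h a b =>
      obtain ⟨A, hA, h⟩ := mem_edgeFinset.1 he
      convert mem_coe.1 hA
      exact Sym2.toFinset_mk_eq.trans h.symm
  · intro e _ e' _ h
    exact Sym2.ext fun x => by simpa using congrArg (x ∈ ·.1) h
  · intro A hA
    obtain ⟨a, b, hab, h⟩ := card_eq_two.1 A.2
    exact ⟨s(a, b), mem_edgeFinset.2 ⟨A, hA, h⟩, Subtype.ext (Sym2.toFinset_mk_eq.trans h.symm)⟩

lemma exists_pairGraph_eq [Fintype α] (G : SimpleGraph α) :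
    ∃ X : Finset {A : Finset α // #A = 2}, pairGraph ↑X = G := by
  classical
  refine ⟨univ.filter fun A => ∀ a ∈ A.1, ∀ b ∈ A.1, a ≠ b → G.Adj a b, ?_⟩
  ext a b
  simp only [pairGraph_adj_iff, coe_filter, mem_univ, true_and, Set.mem_ofPred_eq]
  constructor
  · rintro ⟨hab, A, hA, ha, hb⟩
    exact hA a ha b hb hab
  · intro h
    refine ⟨G.ne_of_adj h, ⟨{a, b}, card_pair (G.ne_of_adj h)⟩, ?_, by simp, by simp⟩
    simp only [mem_insert, mem_singleton]
    rintro x (rfl | rfl) y (rfl | rfl) hxy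
    exacts [absurd rfl hxy, h, h.symm, absurd rfl hxy]

end PairGraph

namespace SimpleGraph

variable {V : Type*} {G : SimpleGraph V} {u v : V}

lemma dist_eq_two_iff :
    G.dist u v = 2 ↔ u ≠ v ∧ ¬G.Adj u v ∧ (G.commonNeighbors u v).Nonempty := by
  rw [← edist_eq_two_iff, dist, ENat.toNat_eq_iff two_ne_zero]
  rfl

end SimpleGraph

section Visibility

variable {V : Type*} {G : SimpleGraph V} {X : Set V} {u v : V}

lemma xVisible_self (u : V) : XVisible G X u u :=
  ⟨.nil, by simp, by simp⟩

lemma SimpleGraph.Adj.xVisible (h : G.Adj u v) : XVisible G X u v :=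
  ⟨h.toWalk, by simp [SimpleGraph.dist_eq_one_iff_adj.2 h], by simp⟩

lemma xVisible_iff_of_dist_eq_two (h : G.dist u v = 2) :
    XVisible G X u v ↔ ∃ w ∉ X, G.Adj u w ∧ G.Adj w v := by
  constructor
  · rintro ⟨p, hp, hX⟩
    rw [h] at hp
    match p with
    | .cons huw (.cons hwv .nil) =>
      refine ⟨_, fun hw => ?_, huw, hwv⟩
      rcases hX _ (by simp) hw with rfl | rfl
      exacts [huw.ne rfl, hwv.ne rfl]
  · rintro ⟨w, hw, huw, hwv⟩
    refine ⟨.cons huw (.cons hwv .nil), by simp [h], ?_⟩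
    simp only [SimpleGraph.Walk.support_cons, SimpleGraph.Walk.support_nil, List.mem_cons,
      List.not_mem_nil, or_false]
    rintro x (rfl | rfl | rfl) hx
    exacts [.inl rfl, absurd hx hw, .inr rfl]

end Visibility

section JohnsonTwo

variable {n : ℕ} {A B W : {A : Finset (Fin n) // #A = 2}}

lemma disjoint_of_not_adj_johnsonGraph_two (hne : A ≠ B) (h : ¬(JohnsonGraph n 2).Adj A B) :
    Disjoint A.1 B.1 := by
  have hle : #(A.1 ∩ B.1) ≤ 2 := (card_le_card inter_subset_left).trans_eq A.2
  have hne1 : #(A.1 ∩ B.1) ≠ 1 := fun h1 => h ⟨hne, h1⟩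
  have hne2 : #(A.1 ∩ B.1) ≠ 2 := fun h2 => hne <| Subtype.ext <|
    eq_of_subset_of_card_le (inter_eq_left.1 (eq_of_subset_of_card_le inter_subset_left
      (by rw [h2, A.2]))) (by rw [A.2, B.2])
  rw [disjoint_iff_inter_eq_empty, ← card_eq_zero]
  omega

lemma johnsonGraph_two_adj_adj_iff (hAB : Disjoint A.1 B.1) :
    (JohnsonGraph n 2).Adj A W ∧ (JohnsonGraph n 2).Adj W B ↔
      ∃ a ∈ A.1, ∃ b ∈ B.1, W.1 = {a, b} := by
  constructor
  · rintro ⟨⟨-, hAW⟩, ⟨-, hWB⟩⟩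
    obtain ⟨a, ha⟩ := card_eq_one.1 hAW
    obtain ⟨b, hb⟩ := card_eq_one.1 hWB
    have ha' := mem_inter.1 (ha ▸ mem_singleton_self a)
    have hb' := mem_inter.1 (hb ▸ mem_singleton_self b)
    exact ⟨a, ha'.1, b, hb'.2, eq_pair_of_card_eq_two W.2 ha'.2 hb'.1
      fun h => disjoint_left.1 hAB ha'.1 (h ▸ hb'.2)⟩
  · rintro ⟨a, ha, b, hb, hW⟩
    have haB : a ∉ B.1 := hAB.notMem_of_mem_left_finset ha
    have hbA : b ∉ A.1 := hAB.notMem_of_mem_right_finset hb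
    refine ⟨⟨fun h => hbA (h ▸ hW ▸ by simp), ?_⟩,
      ⟨fun h => haB (h ▸ hW ▸ by simp), ?_⟩⟩
    · rw [hW, show A.1 ∩ {a, b} = {a} by ext; aesop]; rfl
    · rw [hW, show {a, b} ∩ B.1 = {b} by ext; aesop]; rfl

lemma johnsonGraph_two_dist_eq_two (hAB : Disjoint A.1 B.1) :
    (JohnsonGraph n 2).dist A B = 2 := by
  obtain ⟨a, ha⟩ := card_pos.1 (A.2 ▸ two_pos)
  obtain ⟨b, hb⟩ := card_pos.1 (B.2 ▸ two_pos)
  have hcommon := (johnsonGraph_two_adj_adj_iff (W := ⟨{a, b}, card_pair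
    fun h => disjoint_left.1 hAB ha (h ▸ hb)⟩) hAB).2 ⟨a, ha, b, hb, rfl⟩
  refine dist_eq_two_iff.2 ⟨fun h => ?_, fun h => ?_, _, hcommon.1, hcommon.2.symm⟩
  · exact hAB.notMem_of_mem_left_finset ha (h ▸ ha)
  · exact absurd h.2 (by simp [disjoint_iff_inter_eq_empty.1 hAB])

lemma xVisible_johnsonGraph_two_iff {X : Set {A : Finset (Fin n) // #A = 2}}
    (hAB : Disjoint A.1 B.1) :
    XVisible (JohnsonGraph n 2) X A B ↔
      ∃ W ∉ X, ∃ a ∈ A.1, ∃ b ∈ B.1, W.1 = {a, b} := by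
  simp only [xVisible_iff_of_dist_eq_two (johnsonGraph_two_dist_eq_two hAB),
    johnsonGraph_two_adj_adj_iff hAB]

theorem isMVSet_johnsonGraph_two_iff (X : Set {A : Finset (Fin n) // #A = 2}) :
    IsMVSet (JohnsonGraph n 2) X ↔ (pairGraph X).CliqueFree 4 := by
  constructor
  · intro hX s hs
    obtain ⟨a, b, c, d, hab, hac, had, hbc, hbd, hcd, rfl⟩ := card_eq_four.1 hs.card_eq
    obtain ⟨A, hA, hAab⟩ := hs.isClique (by simp) (by simp) hab
    obtain ⟨B, hB, hBcd⟩ := hs.isClique (by simp) (by simp) hcd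
    have hAB : Disjoint A.1 B.1 := by
      rw [hAab, hBcd]; simp [hac.symm, had.symm, hbc.symm, hbd.symm]
    obtain ⟨W, hWX, x, hx, z, hz, hW⟩ := (xVisible_johnsonGraph_two_iff hAB).1 (hX A hA B hB)
    have hxs : x ∈ ({a, b, c, d} : Finset (Fin n)) := by rw [hAab] at hx; aesop
    have hzs : z ∈ ({a, b, c, d} : Finset (Fin n)) := by rw [hBcd] at hz; aesop
    obtain ⟨W', hW'X, hW'⟩ := hs.isClique hxs hzs fun h => disjoint_left.1 hAB hx (h ▸ hz)
    exact hWX (Subtype.ext (hW.trans hW'.symm) ▸ hW'X)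
  · intro hK A hA B hB
    by_cases hAB : A = B
    · exact hAB ▸ xVisible_self A
    by_cases hadj : (JohnsonGraph n 2).Adj A B
    · exact hadj.xVisible
    have hdisj := disjoint_of_not_adj_johnsonGraph_two hAB hadj
    by_contra hvis
    rw [xVisible_johnsonGraph_two_iff hdisj] at hvis
    have hcross : ∀ a ∈ A.1, ∀ b ∈ B.1, (pairGraph X).Adj a b := fun a ha b hb =>
      by_contra fun hn => hvis ⟨⟨{a, b}, card_pair fun h => disjoint_left.1 hdisj ha (h ▸ hb)⟩,
        fun hW => hn ⟨_, hW, rfl⟩, a, ha, b, hb, rfl⟩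
    refine hK (A.1 ∪ B.1) ⟨?_, by rw [card_union_of_disjoint hdisj, A.2, B.2]⟩
    rw [coe_union, isClique_iff, Set.pairwise_union]
    exact ⟨isClique_pairGraph_of_mem hA, isClique_pairGraph_of_mem hB,
      fun a ha b hb _ => ⟨hcross a ha b hb, (hcross a ha b hb).symm⟩⟩

end JohnsonTwo

theorem johnson_two_mvNumber_general (n : ℕ) :
    mvNumber (JohnsonGraph n 2) = n ^ 2 / 3 := by
  classical
  obtain ⟨X, hX⟩ := exists_pairGraph_eq (turanGraph n 3)
  refine IsGreatest.csSup_eq ⟨⟨X, ?_, ?_⟩, ?_⟩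
  · rw [isMVSet_johnsonGraph_two_iff, hX]
    exact turanGraph_cliqueFree (by norm_num)
  · rw [← card_edgeFinset_pairGraph, ← card_edgeFinset_turanGraph_three]
    congr!
  · rintro _ ⟨Y, hY, rfl⟩
    simpa [card_edgeFinset_pairGraph] using
      ((isMVSet_johnsonGraph_two_iff _).1 hY).card_edgeFinset_le_sq_div_three

/-- For `n ≥ 4`, the mutual-visibility number of the Johnson graph `J(n,2)`
equals `⌊n²/3⌋`. -/
theorem johnson_two_mvNumber (n : ℕ) (hn : 4 ≤ n) :
    mvNumber (JohnsonGraph n 2) = n ^ 2 / 3 :=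
  johnson_two_mvNumber_general n
end
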